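/- Let λ > 0, L : [0,T] → ℝ continuous with |L| ≤ M, and let H(t) = -Σ_{k=1}^∞ (L^{*k} * e_{k-1})(t) be the resolvent-kernel series, where e_j(t) = (tʲ/j!)e^{-λt}. Then for all t ∈ [0,T], ∫₀ᵗ H(t-τ) e^{-λτ} dτ = ∫₀ᵗ J(t,s) e^{-λs} ds, where J(t,s) = -Σ_{k=1}^∞ L^{*k}(t-s) sᵏ/k!. In particular the left-hand side equals an integral against a kernel J that does not depend on λ. -/

import Mathlib

/-!
Writing `e^{-λτ} = e₀(τ)`, the `n`-th term of the left side is `((L^{*(n+1)} * eₙ) * e₀)(t)`.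
Associativity of the truncated convolution (Fubini over the triangle `0 ≤ τ ≤ σ ≤ t`) together
with `eₙ * e₀ = eₙ₊₁` turns it into `(L^{*(n+1)} * eₙ₊₁)(t)`, the `n`-th term of the right side.
The bound `|L^{*(n+1)}(u)| ≤ M^{n+1} uⁿ / n!` dominates both series by summable constants, so sum
and integral may be interchanged. To get continuity on all of `ℝ`, `L` is first extended
constantly outside `[0,T]`, which changes no value that enters the statement.
-/

open MeasureTheory

/-- Convolution on `[0,t]`: `(f*g)(t) = ∫₀ᵗ f(t-s) g(s) ds`. -/
noncomputable def conv (f g : ℝ → ℝ) : ℝ → ℝ :=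
  fun t => ∫ s in (0:ℝ)..t, f (t - s) * g s

/-- Iterated convolution powers: `convPow f n = f^{*(n+1)}`. -/
noncomputable def convPow (f : ℝ → ℝ) : ℕ → ℝ → ℝ
  | 0 => f
  | n + 1 => conv f (convPow f n)

/-- `e_j(t) = (tʲ/j!) e^{-λ t}`. -/
noncomputable def ek (lam : ℝ) (j : ℕ) : ℝ → ℝ :=
  fun t => t ^ j / (Nat.factorial j : ℝ) * Real.exp (-lam * t)

open Set Interval
open scoped Nat

theorem intervalIntegral_triangle_swap {E : Type*} [NormedAddCommGroup E] [NormedSpace ℝ E]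
    [CompleteSpace E] {a b : ℝ} (hab : a ≤ b) {g : ℝ → ℝ → E}
    (hg : Continuous (Function.uncurry g)) :
    ∫ τ in a..b, ∫ σ in τ..b, g τ σ = ∫ σ in a..b, ∫ τ in a..σ, g τ σ := by
  set h : ℝ → ℝ → E := fun τ σ =>
    {p : ℝ × ℝ | p.1 < p.2}.indicator (Function.uncurry g) (τ, σ)
  have hint : IntegrableOn (Function.uncurry h) (Ι a b ×ˢ Ι a b) := by
    refine IntegrableOn.indicator ?_ (measurableSet_lt measurable_fst measurable_snd)
    exact (hg.continuousOn.integrableOn_compact (isCompact_Icc.prod isCompact_Icc)).mono_set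
      (prod_mono uIoc_subset_uIcc uIoc_subset_uIcc)
  calc ∫ τ in a..b, ∫ σ in τ..b, g τ σ = ∫ τ in a..b, ∫ σ in a..b, h τ σ := by
        refine intervalIntegral.integral_congr fun τ hτ => ?_
        rw [uIcc_of_le hab] at hτ
        have hrow : h τ = (Ioi τ).indicator (g τ) := by ext σ; simp [h, indicator]
        rw [hrow, intervalIntegral.integral_of_le hab, intervalIntegral.integral_of_le hτ.2,
          setIntegral_indicator measurableSet_Ioi, Ioc_inter_Ioi, sup_eq_right.2 hτ.1]
    _ = ∫ σ in a..b, ∫ τ in a..b, h τ σ := intervalIntegral_intervalIntegral_swap hint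
    _ = ∫ σ in a..b, ∫ τ in a..σ, g τ σ := by
        refine intervalIntegral.integral_congr fun σ hσ => ?_
        rw [uIcc_of_le hab] at hσ
        have hcol : (fun τ => h τ σ) = (Iio σ).indicator (fun τ => g τ σ) := by
          ext τ; simp [h, indicator]
        rw [hcol, intervalIntegral.integral_of_le hab, intervalIntegral.integral_of_le hσ.1,
          setIntegral_indicator measurableSet_Iio,
          setIntegral_congr_set (ae_eq_refl _ |>.inter Iio_ae_eq_Iic), Ioc_inter_Iic,
          inf_eq_right.2 hσ.2]

theorem Continuous.conv {f g : ℝ → ℝ} (hf : Continuous f) (hg : Continuous g) :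
    Continuous (conv f g) :=
  intervalIntegral.continuous_parametric_intervalIntegral_of_continuous (by fun_prop)
    continuous_id

theorem conv_eqOn_Icc {f f' g g' : ℝ → ℝ} {T : ℝ} (hf : EqOn f f' (Icc 0 T))
    (hg : EqOn g g' (Icc 0 T)) : EqOn (conv f g) (conv f' g') (Icc 0 T) := by
  intro u hu
  refine intervalIntegral.integral_congr fun s hs => ?_
  rw [uIcc_of_le hu.1] at hs
  rw [hf ⟨sub_nonneg.2 hs.2, by linarith [hs.1, hu.2]⟩, hg ⟨hs.1, hs.2.trans hu.2⟩]

theorem conv_sub_apply (f g : ℝ → ℝ) (t τ : ℝ) :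
    conv f g (t - τ) = ∫ σ in τ..t, f (t - σ) * g (σ - τ) := by
  rw [conv, ← sub_self τ, ← intervalIntegral.integral_comp_sub_right]
  simp only [sub_sub_sub_cancel_right]

theorem conv_assoc {f g h : ℝ → ℝ} (hf : Continuous f) (hg : Continuous g) (hh : Continuous h)
    {t : ℝ} (ht : 0 ≤ t) : conv (conv f g) h t = conv f (conv g h) t :=
  calc conv (conv f g) h t
      = ∫ τ in 0..t, ∫ σ in τ..t, f (t - σ) * g (σ - τ) * h τ := by
        change ∫ τ in 0..t, conv f g (t - τ) * h τ = _
        simp only [conv_sub_apply, intervalIntegral.integral_mul_const]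
    _ = ∫ σ in 0..t, ∫ τ in 0..σ, f (t - σ) * g (σ - τ) * h τ :=
        intervalIntegral_triangle_swap ht (by fun_prop)
    _ = conv f (conv g h) t := by
        simp only [conv, mul_assoc, intervalIntegral.integral_const_mul]

theorem abs_conv_le {f g : ℝ → ℝ} {u A B : ℝ} (hu : 0 ≤ u) (hf : ∀ s ∈ Icc 0 u, |f s| ≤ A)
    (hg : ∀ s ∈ Icc 0 u, |g s| ≤ B) : |conv f g u| ≤ A * B * u := by
  have hA : 0 ≤ A := (abs_nonneg _).trans (hf u ⟨hu, le_rfl⟩)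
  have h := intervalIntegral.norm_integral_le_of_norm_le_const (a := 0) (b := u)
    (f := fun s => f (u - s) * g s) (C := A * B) fun s hs => by
      rw [uIoc_of_le hu] at hs
      rw [Real.norm_eq_abs, abs_mul]
      exact mul_le_mul (hf _ ⟨sub_nonneg.2 hs.2, by linarith [hs.1]⟩) (hg _ ⟨hs.1.le, hs.2⟩)
        (abs_nonneg _) hA
  rwa [sub_zero, abs_of_nonneg hu] at h

theorem continuous_convPow {L : ℝ → ℝ} (hL : Continuous L) : ∀ n, Continuous (convPow L n)
  | 0 => hL
  | n + 1 => hL.conv (continuous_convPow hL n)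

theorem convPow_eqOn_Icc {L L' : ℝ → ℝ} {T : ℝ} (h : EqOn L L' (Icc 0 T)) :
    ∀ n, EqOn (convPow L n) (convPow L' n) (Icc 0 T)
  | 0 => h
  | n + 1 => conv_eqOn_Icc h (convPow_eqOn_Icc h n)

theorem abs_convPow_le {L : ℝ → ℝ} {M : ℝ} (hbd : ∀ x, |L x| ≤ M) (n : ℕ) {u : ℝ}
    (hu : 0 ≤ u) : |convPow L n u| ≤ M ^ (n + 1) * u ^ n / n ! := by
  induction n generalizing u with
  | zero => simpa [convPow] using hbd u
  | succ n ih =>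
    have hM : 0 ≤ M := (abs_nonneg _).trans (hbd 0)
    calc |convPow L (n + 1) u|
        ≤ ∫ s in 0..u, M * (M ^ (n + 1) * s ^ n / n !) :=
          intervalIntegral.norm_integral_le_of_norm_le
            (f := fun s => L (u - s) * convPow L n s) hu
            (ae_of_all _ fun s hs => by
              rw [Real.norm_eq_abs, abs_mul]
              exact mul_le_mul (hbd _) (ih hs.1.le) (abs_nonneg _) hM)
            (Continuous.intervalIntegrable (by fun_prop) _ _)
      _ = M ^ (n + 2) * u ^ (n + 1) / (n + 1)! := by
          simp only [intervalIntegral.integral_const_mul, intervalIntegral.integral_div,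
            integral_pow, Nat.factorial_succ]
          push_cast
          field_simp
          ring

theorem abs_convPow_le_of_mem_Icc {L : ℝ → ℝ} {M : ℝ} (hbd : ∀ x, |L x| ≤ M) (n : ℕ)
    {u t : ℝ} (hu : u ∈ Icc 0 t) : |convPow L n u| ≤ M ^ (n + 1) * t ^ n / n ! := by
  obtain ⟨hu0, hut⟩ := hu
  have hM : 0 ≤ M := (abs_nonneg _).trans (hbd 0)
  exact (abs_convPow_le hbd n hu0).trans (by gcongr)

theorem continuous_ek (lam : ℝ) (n : ℕ) : Continuous (ek lam n) := by
  unfold ek; fun_prop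

theorem conv_ek_ek_zero (lam : ℝ) (n : ℕ) : conv (ek lam n) (ek lam 0) = ek lam (n + 1) := by
  ext t
  have h : ∀ s, ek lam n (t - s) * ek lam 0 s = Real.exp (-lam * t) / n ! * (t - s) ^ n := by
    intro s
    simp only [ek, pow_zero, Nat.factorial_zero, Nat.cast_one, div_one, one_mul]
    rw [show -lam * t = -lam * (t - s) + -lam * s by ring, Real.exp_add]
    ring
  change ∫ s in 0..t, ek lam n (t - s) * ek lam 0 s = _
  simp only [h, intervalIntegral.integral_const_mul]
  rw [intervalIntegral.integral_comp_sub_left (fun x => x ^ n), integral_pow, ek,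
    Nat.factorial_succ]
  push_cast
  field_simp
  ring

theorem exp_neg_mul_le_exp_abs_mul (lam : ℝ) {s t : ℝ} (hs : s ∈ Icc 0 t) :
    Real.exp (-lam * s) ≤ Real.exp (|lam| * t) :=
  Real.exp_le_exp.2 (by nlinarith [neg_abs_le lam, abs_nonneg lam, hs.1, hs.2])

theorem abs_ek_le (lam : ℝ) (n : ℕ) {s t : ℝ} (hs : s ∈ Icc 0 t) :
    |ek lam n s| ≤ t ^ n * Real.exp (|lam| * t) := by
  have hpow : s ^ n / n ! ≤ t ^ n :=
    (div_le_self (pow_nonneg hs.1 n) (by exact_mod_cast Nat.factorial_pos n)).trans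
      (pow_le_pow_left₀ hs.1 hs.2 n)
  rw [ek, abs_mul, abs_of_nonneg (div_nonneg (pow_nonneg hs.1 n) (by positivity)),
    abs_of_pos (Real.exp_pos _)]
  exact mul_le_mul hpow (exp_neg_mul_le_exp_abs_mul lam hs) (Real.exp_pos _).le
    (pow_nonneg (hs.1.trans hs.2) n)

theorem abs_conv_convPow_ek_le {L : ℝ → ℝ} {M : ℝ} (hbd : ∀ x, |L x| ≤ M) (lam : ℝ) (n : ℕ)
    {u t : ℝ} (hu : u ∈ Icc 0 t) :
    |conv (convPow L n) (ek lam n) u|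
      ≤ M ^ (n + 1) * t ^ n / n ! * (t ^ n * Real.exp (|lam| * t)) * t := by
  have hM : 0 ≤ M := (abs_nonneg _).trans (hbd 0)
  have ht : 0 ≤ t := hu.1.trans hu.2
  have hbound := abs_conv_le hu.1
    (fun s hs => abs_convPow_le_of_mem_Icc hbd n ⟨hs.1, hs.2.trans hu.2⟩)
    (fun s hs => abs_ek_le lam n ⟨hs.1, hs.2.trans hu.2⟩)
  exact hbound.trans (mul_le_mul_of_nonneg_left hu.2 (by positivity))

theorem integral_conv_ek_mul_exp {F : ℝ → ℝ} (hF : Continuous F) (lam : ℝ) (n : ℕ) {t : ℝ}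
    (ht : 0 ≤ t) :
    ∫ τ in 0..t, conv F (ek lam n) (t - τ) * Real.exp (-lam * τ)
      = ∫ s in 0..t, F (t - s) * s ^ (n + 1) / (n + 1)! * Real.exp (-lam * s) := by
  have hek0 : ∀ τ, Real.exp (-lam * τ) = ek lam 0 τ := by simp [ek]
  calc ∫ τ in 0..t, conv F (ek lam n) (t - τ) * Real.exp (-lam * τ)
      = conv (conv F (ek lam n)) (ek lam 0) t := by simp only [hek0]; rfl
    _ = conv F (ek lam (n + 1)) t := by
        rw [conv_assoc hF (continuous_ek lam n) (continuous_ek lam 0) ht, conv_ek_ek_zero]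
    _ = ∫ s in 0..t, F (t - s) * s ^ (n + 1) / (n + 1)! * Real.exp (-lam * s) := by
        unfold conv ek
        congr 1
        ext s
        ring

theorem intervalIntegral_tsum_of_norm_le {E : Type*} [NormedAddCommGroup E] [NormedSpace ℝ E]
    [CompleteSpace E] {a b : ℝ} {f : ℕ → ℝ → E} {c : ℕ → ℝ} (hf : ∀ n, Continuous (f n))
    (hc : Summable c) (hbd : ∀ n, ∀ s ∈ Ι a b, ‖f n s‖ ≤ c n) :
    ∫ s in a..b, ∑' n, f n s = ∑' n, ∫ s in a..b, f n s :=
  (intervalIntegral.hasSum_integral_of_dominated_convergence (fun n _ => c n)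
    (fun n => (hf n).aestronglyMeasurable) (fun n => ae_of_all _ (hbd n))
    (ae_of_all _ fun _ _ => hc) intervalIntegrable_const
    (ae_of_all _ fun s hs => (hc.of_norm_bounded fun n => hbd n s hs).hasSum)).tsum_eq.symm

theorem integral_tsum_conv_convPow_ek_mul_exp {L : ℝ → ℝ} {M : ℝ} (hL : Continuous L)
    (hbd : ∀ x, |L x| ≤ M) (lam : ℝ) {t : ℝ} (ht : 0 ≤ t) :
    ∫ τ in 0..t, (∑' n, conv (convPow L n) (ek lam n) (t - τ)) * Real.exp (-lam * τ)
      = ∫ s in 0..t,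
          (∑' n, convPow L n (t - s) * s ^ (n + 1) / (n + 1)!) * Real.exp (-lam * s) := by
  have hM : 0 ≤ M := (abs_nonneg _).trans (hbd 0)
  set E := Real.exp (|lam| * t)
  have hIcc : ∀ s ∈ Ι 0 t, s ∈ Icc 0 t ∧ t - s ∈ Icc 0 t := fun s hs => by
    rw [uIoc_of_le ht] at hs
    exact ⟨Ioc_subset_Icc_self hs, by linarith [hs.2], by linarith [hs.1]⟩
  have hsum : ∀ C, Summable fun n : ℕ => C * ((M * t ^ 2) ^ n / n !) :=
    fun C => (Real.summable_pow_div_factorial _).mul_left C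
  simp_rw [← tsum_mul_right]
  rw [intervalIntegral_tsum_of_norm_le
      (c := fun n => M ^ (n + 1) * t ^ n / n ! * (t ^ n * E) * t * E)
      (fun n => by have := (continuous_convPow hL n).conv (continuous_ek lam n); fun_prop)
      ((hsum (M * t * E * E)).congr fun n => by ring) ?lhs,
    intervalIntegral_tsum_of_norm_le
      (c := fun n => M ^ (n + 1) * t ^ n / n ! * (t ^ (n + 1) * E))
      (fun n => by have := continuous_convPow hL n; fun_prop)
      ((hsum (M * t * E)).congr fun n => by ring) ?rhs]
  · exact tsum_congr fun n => integral_conv_ek_mul_exp (continuous_convPow hL n) lam n ht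
  case lhs =>
    intro n τ hτ
    rw [Real.norm_eq_abs, abs_mul, abs_of_pos (Real.exp_pos _)]
    exact mul_le_mul (abs_conv_convPow_ek_le hbd lam n (hIcc τ hτ).2)
      (exp_neg_mul_le_exp_abs_mul lam (hIcc τ hτ).1) (Real.exp_pos _).le (by positivity)
  case rhs =>
    intro n s hs
    have hterm : convPow L n (t - s) * s ^ (n + 1) / (n + 1)! * Real.exp (-lam * s)
        = convPow L n (t - s) * ek lam (n + 1) s := by
      simp only [ek]; ring
    rw [hterm, Real.norm_eq_abs, abs_mul]
    exact mul_le_mul (abs_convPow_le_of_mem_Icc hbd n (hIcc s hs).2)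
      (abs_ek_le lam (n + 1) (hIcc s hs).1) (abs_nonneg _) (by positivity)

theorem H_integral_eq_J_integral_general (T lam M : ℝ) (L : ℝ → ℝ)
    (hL : ContinuousOn L (Set.Icc 0 T))
    (hbd : ∀ t ∈ Set.Icc (0:ℝ) T, |L t| ≤ M) :
    ∀ t ∈ Set.Icc (0:ℝ) T,
      (∫ τ in (0:ℝ)..t,
          (-(∑' n : ℕ, conv (convPow L n) (ek lam n) (t - τ))) * Real.exp (-lam * τ))
        = ∫ s in (0:ℝ)..t,
            (-(∑' n : ℕ, convPow L n (t - s) * s ^ (n + 1) / (Nat.factorial (n + 1) : ℝ)))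
              * Real.exp (-lam * s) := by
  intro t ht
  have hT : 0 ≤ T := ht.1.trans ht.2
  obtain ⟨L', hL'c, hL'bd, hLL'⟩ :
      ∃ L' : ℝ → ℝ, Continuous L' ∧ (∀ x, |L' x| ≤ M) ∧ EqOn L L' (Icc 0 T) :=
    ⟨IccExtend hT ((Icc 0 T).domRestrict L), hL.domRestrict.Icc_extend',
      fun x => hbd _ (projIcc 0 T hT x).2,
      fun x hx => (IccExtend_of_mem hT ((Icc 0 T).domRestrict L) hx).symm⟩
  have hP : ∀ n, EqOn (convPow L n) (convPow L' n) (Icc 0 T) := convPow_eqOn_Icc hLL'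
  have hsub : ∀ s ∈ uIcc 0 t, t - s ∈ Icc 0 T := fun s hs => by
    rw [uIcc_of_le ht.1] at hs
    exact ⟨by linarith [hs.2], by linarith [hs.1, ht.2]⟩
  have key := integral_tsum_conv_convPow_ek_mul_exp hL'c hL'bd lam ht.1
  simp only [neg_mul, intervalIntegral.integral_neg, neg_inj] at key ⊢
  convert key using 1 <;> refine intervalIntegral.integral_congr fun s hs => ?_
  · have h n : conv (convPow L n) (ek lam n) (t - s) = conv (convPow L' n) (ek lam n) (t - s) :=
      conv_eqOn_Icc (hP n) (eqOn_refl _ _) (hsub s hs)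
    simp only [h]
  · have h n : convPow L n (t - s) = convPow L' n (t - s) := hP n (hsub s hs)
    simp only [h]

/-- For the resolvent-kernel series `H(t) = -Σ_{k≥1} (L^{*k} * e_{k-1})(t)` one has
`∫₀ᵗ H(t-τ) e^{-λτ} dτ = ∫₀ᵗ J(t,s) e^{-λs} ds` with
`J(t,s) = -Σ_{k≥1} L^{*k}(t-s) sᵏ/k!`, a kernel which does not depend on `λ`. -/
theorem H_integral_eq_J_integral (T lam M : ℝ) (hT : 0 < T) (hlam : 0 < lam)
    (hM : 0 ≤ M) (L : ℝ → ℝ)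
    (hL : ContinuousOn L (Set.Icc 0 T))
    (hbd : ∀ t ∈ Set.Icc (0:ℝ) T, |L t| ≤ M) :
    ∀ t ∈ Set.Icc (0:ℝ) T,
      (∫ τ in (0:ℝ)..t,
          (-(∑' n : ℕ, conv (convPow L n) (ek lam n) (t - τ))) * Real.exp (-lam * τ))
        = ∫ s in (0:ℝ)..t,
            (-(∑' n : ℕ, convPow L n (t - s) * s ^ (n + 1) / (Nat.factorial (n + 1) : ℝ)))
              * Real.exp (-lam * s) :=
  H_integral_eq_J_integral_general T lam M L hL hbd
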